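/- For every N ≥ 1, every K ∈ ℕ, and every pair of starting decks d₁, d₂ (permutations of Fin N), the total variation distance between the K-step distributions of the inverse uniform riffle shuffle satisfies TV(μ_K(d₁), μ_K(d₂)) ≤ N² · (1/2)^K. -/

import Mathlib

open scoped ENNReal

/-- Total variation distance between two distributions: `(1/2) Σ_x |μ(x) − ν(x)|`. -/
noncomputable def tvDist {X : Type*} (μ ν : PMF X) : ℝ≥0∞ :=
  (1 / 2) * ∑' x, max (μ x - ν x) (ν x - μ x)

/-- One step of the inverse uniform riffle shuffle: sample a uniformly random bit-vector
`b ∈ {0,1}^N`; the new deck lists first, in their original relative order, the cards at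
positions `p` with `b p = false`, followed, in their original relative order, by the cards at
positions `p` with `b p = true`. (The stable sort `Tuple.sort b` of positions by their bit is
exactly this position rearrangement.) -/
noncomputable def riffleStep {N : ℕ} (d : Equiv.Perm (Fin N)) : PMF (Equiv.Perm (Fin N)) :=
  (PMF.uniformOfFintype (Fin N → Bool)).bind fun b =>
    PMF.pure (d * Tuple.sort b)

/-- Distribution of the deck after `K` steps of the inverse uniform riffle shuffle from `d`. -/
noncomputable def riffleWalk {N : ℕ} (d : Equiv.Perm (Fin N)) :
    ℕ → PMF (Equiv.Perm (Fin N))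
  | 0 => PMF.pure d
  | (K + 1) => (riffleWalk d K).bind riffleStep

/-!
After `K` inverse shuffles from `d`, the deck is `d` followed by the stable sort of the positions
by independent uniform `K`-bit labels: the card at each original position is labelled by the bits
it was dealt, the latest bit being the most significant. When the `N` labels are distinct,
relabelling the positions by a permutation `ρ` only precomposes the sorting permutation with
`ρ⁻¹`; relabelling by `ρ = d₁⁻¹ * d₂` therefore couples the walks started at `d₁` and `d₂` so
that they agree unless two labels collide. By a union bound over pairs of positions, a collision
has probability at most `N² / 2^K`.
-/

namespace Nat

theorem ofBits_injective {n : ℕ} : Function.Injective (ofBits : (Fin n → Bool) → ℕ) := by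
  intro v w h
  funext i
  simpa using congrArg (testBit · i) h

theorem ofBits_snoc {n : ℕ} (v : Fin n → Bool) (c : Bool) :
    ofBits (Fin.snoc v c : Fin (n + 1) → Bool) = ofBits v + c.toNat * 2 ^ n := by
  induction n with
  | zero => simp [ofBits_succ, Fin.snoc]
  | succ n ih =>
    have htail : (Fin.snoc v c : Fin (n + 2) → Bool) ∘ Fin.succ = Fin.snoc (v ∘ Fin.succ) c := by
      funext i
      refine Fin.lastCases ?_ (fun j => ?_) i
      · simp only [Function.comp_apply, Fin.succ_last, Fin.snoc_last]
      · simp only [Function.comp_apply, Fin.succ_castSucc, Fin.snoc_castSucc]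
    rw [ofBits_succ, ofBits_succ v, htail, ih, Fin.snoc_apply_zero]
    ring

theorem ofBits_snoc_lt_ofBits_snoc_iff {n : ℕ} (v w : Fin n → Bool) (c c' : Bool) :
    ofBits (Fin.snoc v c : Fin (n + 1) → Bool) < ofBits (Fin.snoc w c' : Fin (n + 1) → Bool) ↔
      toLex (c, ofBits v) < toLex (c', ofBits w) := by
  have hv := ofBits_lt_two_pow v
  have hw := ofBits_lt_two_pow w
  rw [ofBits_snoc, ofBits_snoc, Prod.Lex.toLex_lt_toLex]
  cases c <;> cases c' <;> simp [Bool.lt_iff] <;> omega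

end Nat

namespace Tuple

variable {n : ℕ} {α β : Type*} [LinearOrder α] [LinearOrder β]

theorem sort_eq_sort_of_lt_iff {f : Fin n → α} {g : Fin n → β}
    (h : ∀ i j, f i < f j ↔ g i < g j) : sort f = sort g := by
  have hf := eq_sort_iff.mp (rfl : sort f = sort f)
  refine eq_sort_iff.mpr ⟨fun i j hij => ?_, fun i j hij hg => hf.2 i j hij ?_⟩
  · exact not_lt.mp ((h _ _).not.mp (not_lt.mpr (hf.1 hij)))
  · exact le_antisymm (not_lt.mp ((h _ _).not.mpr hg.symm.not_lt))
      (not_lt.mp ((h _ _).not.mpr hg.not_lt))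

theorem sort_comp_perm_of_injective {f : Fin n → α} (hf : Function.Injective f)
    (ρ : Equiv.Perm (Fin n)) : sort (f ∘ ρ) = ρ⁻¹ * sort f := by
  rw [eq_inv_mul_iff_mul_eq]
  ext i
  exact congrArg Fin.val (hf (congrFun comp_perm_comp_sort_eq_comp_sort i))

theorem sort_mul_sort_bool (f : Fin n → α) (b : Fin n → Bool) :
    sort f * sort b = sort fun q => toLex (b ((sort f)⁻¹ q), f q) := by
  have hf := eq_sort_iff.mp (rfl : sort f = sort f)
  have hb := eq_sort_iff.mp (rfl : sort b = sort b)
  refine eq_sort_iff.mpr ⟨fun i j hij => ?_, fun i j hij hkey => ?_⟩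
  · simp only [Function.comp_apply, Equiv.Perm.mul_apply, Equiv.Perm.coe_inv,
      Equiv.symm_apply_apply, Prod.Lex.toLex_le_toLex]
    rcases (hb.1 hij).lt_or_eq with hlt | hbij
    · exact Or.inl hlt
    · rcases hij.lt_or_eq with hlt | rfl
      · exact Or.inr ⟨hbij, hf.1 (hb.2 i j hlt hbij).le⟩
      · exact Or.inr ⟨rfl, le_rfl⟩
  · simp only [Equiv.Perm.mul_apply, Equiv.Perm.coe_inv, Equiv.symm_apply_apply, toLex_inj,
      Prod.mk.injEq] at hkey
    exact hf.2 _ _ (hb.2 i j hij hkey.1) hkey.2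

end Tuple

namespace PMF

section Uniform

variable {α β γ : Type*} [Fintype α] [Nonempty α] [Fintype β] [Nonempty β]
  [Fintype γ] [Nonempty γ]

theorem map_uniformOfFintype_equiv (e : α ≃ β) :
    (uniformOfFintype α).map e = uniformOfFintype β := by
  ext b
  rw [map_apply, tsum_eq_single (e.symm b)
      (fun a ha => if_neg fun h => ha (e.eq_symm_apply.mpr h.symm)),
    if_pos (e.apply_symm_apply b).symm, uniformOfFintype_apply, uniformOfFintype_apply,
    Fintype.card_congr e]

theorem bind_uniformOfFintype_map_prodMk :
    (uniformOfFintype α).bind (fun a => (uniformOfFintype β).map (Prod.mk a)) =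
      uniformOfFintype (α × β) := by
  classical
  ext ⟨a, b⟩
  simp [bind_apply, map_apply, uniformOfFintype_apply, ENNReal.mul_inv, Prod.ext_iff, ite_and]

theorem bind_uniformOfFintype_map_equiv (e : α × β ≃ γ) :
    (uniformOfFintype α).bind (fun a => (uniformOfFintype β).map fun b => e (a, b)) =
      uniformOfFintype γ := by
  rw [← map_uniformOfFintype_equiv e, ← bind_uniformOfFintype_map_prodMk, map_bind]
  simp_rw [map_comp]
  rfl

end Uniform

section Coupling

variable {α X : Type*}

theorem tsum_map_tsub_map_le (p : PMF α) (f g : α → X) :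
    ∑' x, (p.map f x - p.map g x) ≤ p.toOuterMeasure {a | f a ≠ g a} := by
  classical
  have hpoint : ∀ x, p.map f x - p.map g x ≤ ∑' a, if x = f a ∧ x ≠ g a then p a else 0 := by
    intro x
    rw [tsub_le_iff_left, map_apply, map_apply, ← ENNReal.tsum_add]
    refine ENNReal.tsum_le_tsum fun a => ?_
    split_ifs <;> simp_all
  calc ∑' x, (p.map f x - p.map g x)
      ≤ ∑' x, ∑' a, if x = f a ∧ x ≠ g a then p a else 0 := ENNReal.tsum_le_tsum hpoint
    _ = ∑' a, {a | f a ≠ g a}.indicator p a := by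
      rw [ENNReal.tsum_comm]
      refine tsum_congr fun a => ?_
      simp only [ite_and, tsum_ite_eq, Set.indicator_apply, Set.mem_ofPred_eq]
    _ = p.toOuterMeasure {a | f a ≠ g a} := (toOuterMeasure_apply p _).symm

theorem tvDist_map_le (p : PMF α) (f g : α → X) :
    tvDist (p.map f) (p.map g) ≤ p.toOuterMeasure {a | f a ≠ g a} := by
  have hsymm : {a | g a ≠ f a} = {a | f a ≠ g a} := by simp only [ne_comm]
  calc tvDist (p.map f) (p.map g)
      ≤ 1 / 2 * (∑' x, (p.map f x - p.map g x) + ∑' x, (p.map g x - p.map f x)) := by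
        rw [tvDist, ← ENNReal.tsum_add]
        gcongr with x
        exact max_le le_self_add le_add_self
    _ ≤ 1 / 2 * (p.toOuterMeasure {a | f a ≠ g a} + p.toOuterMeasure {a | f a ≠ g a}) := by
        gcongr
        · exact tsum_map_tsub_map_le p f g
        · exact hsymm ▸ tsum_map_tsub_map_le p g f
    _ = p.toOuterMeasure {a | f a ≠ g a} := by
        rw [← two_mul, ← mul_assoc, one_div,
          ENNReal.inv_mul_cancel two_ne_zero ENNReal.ofNat_ne_top, one_mul]

end Coupling

section Birthday

variable {α β : Type*} [Fintype α] [DecidableEq α] [Fintype β] [Nonempty β]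

theorem toOuterMeasure_uniformOfFintype_apply_eq_apply_le {i j : α} (hij : i ≠ j) :
    (uniformOfFintype (α → β)).toOuterMeasure {f | f i = f j} ≤
      (Fintype.card β : ℝ≥0∞)⁻¹ := by
  classical
  -- `(f, c) ↦ update f j c` is injective on `{f | f i = f j} × β`: `f j` is recovered as `f i`.
  have hcard :
      Fintype.card {f : α → β // f i = f j} * Fintype.card β ≤ Fintype.card (α → β) := by
    rw [← Fintype.card_prod]
    refine Fintype.card_le_of_injective (fun fc => Function.update fc.1.1 j fc.2) ?_
    rintro ⟨⟨f, hf⟩, c⟩ ⟨⟨f', hf'⟩, c'⟩ h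
    have hc : c = c' := by simpa using congrFun h j
    subst hc
    have hi : f i = f' i := by simpa [Function.update_of_ne hij] using congrFun h i
    have hff : f = f' := by
      funext x
      by_cases hx : x = j
      · subst hx
        rw [← hf, ← hf', hi]
      · simpa [Function.update_of_ne hx] using congrFun h x
    subst hff
    rfl
  rw [toOuterMeasure_uniformOfFintype_apply, ENNReal.div_le_iff (by simp) (by simp),
    ← ENNReal.mul_le_iff_le_inv (by simp) (by simp), mul_comm]
  exact_mod_cast hcard

theorem toOuterMeasure_uniformOfFintype_not_injective_le :
    (uniformOfFintype (α → β)).toOuterMeasure {f | ¬ Function.Injective f} ≤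
      (Fintype.card α : ℝ≥0∞) ^ 2 / Fintype.card β := by
  have hsub : {f : α → β | ¬ Function.Injective f} ⊆
      ⋃ p ∈ (Finset.univ : Finset α).offDiag, {f | f p.1 = f p.2} := by
    intro f hf
    simp only [Function.Injective, not_forall, Set.mem_ofPred_eq] at hf
    obtain ⟨a, b, hab, hne⟩ := hf
    simp only [Set.mem_iUnion, Finset.mem_offDiag, Finset.mem_univ, true_and]
    exact ⟨(a, b), hne, hab⟩
  calc _ ≤ ∑ p ∈ (Finset.univ : Finset α).offDiag,
          (uniformOfFintype (α → β)).toOuterMeasure {f | f p.1 = f p.2} :=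
        (MeasureTheory.measure_mono hsub).trans (MeasureTheory.measure_biUnion_finset_le _ _)
    _ ≤ ∑ _p ∈ (Finset.univ : Finset α).offDiag, (Fintype.card β : ℝ≥0∞)⁻¹ :=
        Finset.sum_le_sum fun p hp => toOuterMeasure_uniformOfFintype_apply_eq_apply_le
          (Finset.mem_offDiag.mp hp).2.2
    _ ≤ (Fintype.card α : ℝ≥0∞) ^ 2 / Fintype.card β := by
        rw [Finset.sum_const, nsmul_eq_mul, div_eq_mul_inv]
        gcongr
        rw [Finset.offDiag_card, Finset.card_univ, sq]
        exact_mod_cast Nat.sub_le _ _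

end Birthday

end PMF

/-- `L q` lists the bits dealt to the card that started at position `q`; read as a binary number,
the bit of step `j` has weight `2 ^ j`, so later steps are more significant. -/
def sortByLabels {N K : ℕ} (L : Fin N → Fin K → Bool) : Equiv.Perm (Fin N) :=
  Tuple.sort fun q => Nat.ofBits (L q)

theorem sortByLabels_fin_zero {N : ℕ} (L : Fin N → Fin 0 → Bool) : sortByLabels L = 1 := by
  have hconst : (fun q => Nat.ofBits (L q)) = fun _ => 0 := funext fun q => Nat.ofBits_zero (L q)
  rw [sortByLabels, hconst]
  exact Tuple.sort_eq_refl_iff_monotone.mpr monotone_const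

theorem sortByLabels_mul_sort {N K : ℕ} (L : Fin N → Fin K → Bool) (b : Fin N → Bool) :
    sortByLabels L * Tuple.sort b =
      sortByLabels fun q => Fin.snoc (L q) (b ((sortByLabels L)⁻¹ q)) := by
  rw [sortByLabels, Tuple.sort_mul_sort_bool]
  exact Tuple.sort_eq_sort_of_lt_iff fun i j => (Nat.ofBits_snoc_lt_ofBits_snoc_iff ..).symm

theorem sortByLabels_comp_perm {N K : ℕ} {L : Fin N → Fin K → Bool} (hL : Function.Injective L)
    (ρ : Equiv.Perm (Fin N)) : sortByLabels (L ∘ ρ) = ρ⁻¹ * sortByLabels L :=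
  Tuple.sort_comp_perm_of_injective (Nat.ofBits_injective.comp hL) ρ

/-- The card that started at `q` sits at position `(sortByLabels L)⁻¹ q` when the bits `b` of the
next step are dealt. -/
def extendLabels (N K : ℕ) :
    (Fin N → Fin K → Bool) × (Fin N → Bool) ≃ (Fin N → Fin (K + 1) → Bool) where
  toFun Lb q := Fin.snoc (Lb.1 q) (Lb.2 ((sortByLabels Lb.1)⁻¹ q))
  invFun M := (fun q => Fin.init (M q),
    fun p => M (sortByLabels (fun q => Fin.init (M q)) p) (Fin.last K))
  left_inv := by
    rintro ⟨L, b⟩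
    simp [Fin.init_snoc]
  right_inv M := by
    funext q
    simp [Fin.snoc_init_self]

theorem riffleStep_eq_map {N : ℕ} (d : Equiv.Perm (Fin N)) :
    riffleStep d = (PMF.uniformOfFintype (Fin N → Bool)).map fun b => d * Tuple.sort b :=
  rfl

theorem riffleWalk_eq_map_sortByLabels {N : ℕ} (d : Equiv.Perm (Fin N)) (K : ℕ) :
    riffleWalk d K =
      (PMF.uniformOfFintype (Fin N → Fin K → Bool)).map fun L => d * sortByLabels L := by
  induction K with
  | zero =>
    simp only [sortByLabels_fin_zero, mul_one]
    exact (PMF.map_const _ d).symm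
  | succ K ih =>
    have hstep : ∀ L : Fin N → Fin K → Bool, riffleStep (d * sortByLabels L) =
        ((PMF.uniformOfFintype (Fin N → Bool)).map fun b => extendLabels N K (L, b)).map
          fun M => d * sortByLabels M := by
      intro L
      rw [riffleStep_eq_map, PMF.map_comp]
      congr 1
      funext b
      simp only [Function.comp_apply, mul_assoc, sortByLabels_mul_sort]
      rfl
    rw [riffleWalk, ih, PMF.bind_map]
    simp only [Function.comp_def, hstep]
    rw [← PMF.map_bind, PMF.bind_uniformOfFintype_map_equiv]

theorem tvDist_riffleWalk_le {N : ℕ} (K : ℕ) (d₁ d₂ : Equiv.Perm (Fin N)) :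
    tvDist (riffleWalk d₁ K) (riffleWalk d₂ K) ≤
      (PMF.uniformOfFintype (Fin N → Fin K → Bool)).toOuterMeasure
        {L | ¬ Function.Injective L} := by
  set ρ := d₁⁻¹ * d₂
  have hrelabel : riffleWalk d₂ K = (PMF.uniformOfFintype (Fin N → Fin K → Bool)).map
      fun L => d₂ * sortByLabels (L ∘ ρ) := by
    rw [riffleWalk_eq_map_sortByLabels]
    conv_lhs => rw [← PMF.map_uniformOfFintype_equiv (Equiv.arrowCongr ρ.symm (Equiv.refl _))]
    rw [PMF.map_comp]
    rfl
  rw [riffleWalk_eq_map_sortByLabels d₁, hrelabel]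
  refine (PMF.tvDist_map_le _ _ _).trans (MeasureTheory.measure_mono fun L hL hinj => hL ?_)
  rw [sortByLabels_comp_perm hinj, mul_inv_rev, inv_inv, ← mul_assoc, mul_inv_cancel_left]

theorem riffleWalk_tv_le_general (N K : ℕ) (d₁ d₂ : Equiv.Perm (Fin N)) :
    tvDist (riffleWalk d₁ K) (riffleWalk d₂ K)
      ≤ (N : ℝ≥0∞) ^ 2 * (1 / 2 : ℝ≥0∞) ^ K := by
  calc tvDist (riffleWalk d₁ K) (riffleWalk d₂ K)
      ≤ (PMF.uniformOfFintype (Fin N → Fin K → Bool)).toOuterMeasure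
          {L | ¬ Function.Injective L} := tvDist_riffleWalk_le K d₁ d₂
    _ ≤ (Fintype.card (Fin N) : ℝ≥0∞) ^ 2 / Fintype.card (Fin K → Bool) :=
        PMF.toOuterMeasure_uniformOfFintype_not_injective_le
    _ = (N : ℝ≥0∞) ^ 2 * (1 / 2 : ℝ≥0∞) ^ K := by
        simp [div_eq_mul_inv, ENNReal.inv_pow]

/-- **Rapid mixing of the inverse uniform riffle shuffle (upper bound).** For any `N ≥ 1`, `K`,
and starting decks `d₁, d₂`, the TV distance between the `K`-step distributions is at most
`N² · (1/2)^K`. -/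
theorem riffleWalk_tv_le (N K : ℕ) (hN : 1 ≤ N) (d₁ d₂ : Equiv.Perm (Fin N)) :
    tvDist (riffleWalk d₁ K) (riffleWalk d₂ K)
      ≤ (N : ℝ≥0∞) ^ 2 * (1 / 2 : ℝ≥0∞) ^ K :=
  riffleWalk_tv_le_general N K d₁ d₂
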